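/- arXiv:1010.1511 — 7 statements merged into one kernel-verified Lean document; each statement's English description precedes it below -/
import Mathlib

section
/- Let γ ∈ (0,1), α = (2 − γ − γ·√(1 + 2γ(γ−1)))/(2 + γ³), β = (1 + γ² + √(1 + 2γ(γ−1)))/(2 + γ³). Then 1 < (2 − γ)·β < 2 and (1 − 2γ)·β < 1. -/
theorem stmt_1 (γ : ℝ) (hγ : γ ∈ Set.Ioo (0:ℝ) 1)
    (α β : ℝ)
    (hα : α = (2 - γ - γ * Real.sqrt (1 + 2*γ*(γ-1))) / (2 + γ^3))
    (hβ : β = (1 + γ^2 + Real.sqrt (1 + 2*γ*(γ-1))) / (2 + γ^3)) :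
    1 < (2 - γ) * β ∧ (2 - γ) * β < 2 ∧ (1 - 2*γ) * β < 1 := by
  obtain ⟨h0, h1⟩ := hγ
  set s := Real.sqrt (1 + 2*γ*(γ-1)) with hsdef
  have hnn : (0:ℝ) ≤ 1 + 2*γ*(γ-1) := by nlinarith
  have hs2 : s^2 = 1 + 2*γ*(γ-1) := Real.sq_sqrt hnn
  have hs0 : 0 < s := Real.sqrt_pos.mpr (by nlinarith)
  have hs1 : s < 1 := by
    nlinarith [hs2, hs0]
  have hd : (0:ℝ) < 2 + γ^3 := by nlinarith
  subst hβ
  refine ⟨?_, ?_, ?_⟩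
  · rw [mul_div_assoc', lt_div_iff₀ hd]
    nlinarith [hs2, mul_pos hs0 (show (0:ℝ) < 2 - γ - γ*s by nlinarith)]
  · rw [mul_div_assoc', div_lt_iff₀ hd]
    nlinarith [hs2]
  · rw [mul_div_assoc', div_lt_iff₀ hd]
    nlinarith [hs2]
end

section
/- Let α, β be real with (α,β) ≠ (0,0). For the 2×2 symmetric matrix M = [[p, r], [r, q]] with p = −(2α+γβ), r = −γα, q = −2β, and A = (1/√(α²+β²))·[[α, β], [−β, α]], if α + γβ = 1 and γα² + 2β² = 2β, then A·M·Aᵀ is the diagonal matrix diag(−2, −(2−γ)β). -/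
open Matrix

theorem stmt_4 (γ α β : ℝ) (h : (α, β) ≠ (0, 0))
    (h1 : α + γ*β = 1) (h2 : γ*α^2 + 2*β^2 = 2*β)
    (A M : Matrix (Fin 2) (Fin 2) ℝ)
    (hA : A = (1 / Real.sqrt (α^2 + β^2)) • !![α, β; -β, α])
    (hM : M = !![-(2*α + γ*β), -(γ*α); -(γ*α), -(2*β)]) :
    A * M * Aᵀ = !![(-2 : ℝ), 0; 0, -((2 - γ)*β)] := by
  have hs : α^2 + β^2 ≠ 0 := by
    intro hz
    apply h
    have hα : α = 0 := by nlinarith [sq_nonneg α, sq_nonneg β]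
    have hβ : β = 0 := by nlinarith [sq_nonneg α, sq_nonneg β]
    simp [hα, hβ]
  have hs' : 0 ≤ α^2 + β^2 := by positivity
  have hsq : Real.sqrt (α^2 + β^2) ^ 2 = α^2 + β^2 := Real.sq_sqrt hs'
  set s := Real.sqrt (α^2 + β^2) with hsdef
  have hT : !![α, β; -β, α]ᵀ = !![α, -β; β, α] := by
    ext i j; fin_cases i <;> fin_cases j <;> simp
  have hB : !![α, β; -β, α] * M * !![α, β; -β, α]ᵀ
      = (α^2 + β^2) • !![(-2 : ℝ), 0; 0, -((2 - γ)*β)] := by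
    subst hM
    rw [hT]
    ext i j
    fin_cases i <;> fin_cases j <;>
      simp [Matrix.mul_apply, Fin.sum_univ_two]
    · linear_combination (-2*α^2)*h1 + (-β)*h2
    · linear_combination (2*α*β)*h1 + (-α)*h2
    · linear_combination (2*α*β)*h1 + (-α)*h2
    · linear_combination (-2*β^2)*h1 + β*h2
  calc A * M * Aᵀ = ((1/s) * (1/s)) • (!![α, β; -β, α] * M * !![α, β; -β, α]ᵀ) := by
        rw [hA, Matrix.transpose_smul, Matrix.smul_mul, Matrix.mul_smul, Matrix.smul_mul,
          smul_smul]
    _ = _ := by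
        rw [hB, smul_smul]
        have hone : (1/s) * (1/s) * (α^2 + β^2) = 1 := by
          have hs0 : s ≠ 0 := Real.sqrt_ne_zero'.mpr (lt_of_le_of_ne hs' (Ne.symm hs))
          rw [← hsq]; field_simp
        rw [hone, one_smul]
end

section
/- Let α, β be real with (α,β) ≠ (0,0) and B = (1/√(α²+4β²))·[[α, 2β], [−2β, α]]. If α + γβ = 1 and γα² + 2β² = 2β, then B·[[α − γβ, γα], [γα, β]]·Bᵀ = diag(1, (1−2γ)β). -/
/-!
The rows of `B` are the normalisations of `(α, 2β)` and `(-2β, α)`: orthogonal vectors of equal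
length, so `B Bᵀ = 1`. The relations `α + γβ = 1` and `γα² + 2β² = 2β` say exactly that these
vectors are eigenvectors of the potential matrix, with eigenvalues `1` and `(1 - 2γ)β`.
-/

open Matrix

theorem mul_mul_eq_of_mul_eq_one_of_mul_eq_mul {M : Type*} [Monoid M] {a b c d : M}
    (hbc : b * c = 1) (hac : a * c = c * d) : b * a * c = d := by
  rw [mul_assoc, hac, ← mul_assoc, hbc, one_mul]

theorem Matrix.rotScale_mul_transpose {R : Type*} [CommRing R] (a b : R) :
    !![a, b; -b, a] * !![a, b; -b, a]ᵀ = (a ^ 2 + b ^ 2) • (1 : Matrix (Fin 2) (Fin 2) R) := by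
  ext i j
  fin_cases i <;> fin_cases j <;> simp [mul_apply, Fin.sum_univ_two] <;> ring

theorem Matrix.unit_rotScale_mul_transpose {a b : ℝ} (hab : a ^ 2 + b ^ 2 ≠ 0) :
    ((1 / √(a ^ 2 + b ^ 2)) • !![a, b; -b, a]) * ((1 / √(a ^ 2 + b ^ 2)) • !![a, b; -b, a])ᵀ =
      1 := by
  rw [transpose_smul, Matrix.smul_mul, Matrix.mul_smul, smul_smul, rotScale_mul_transpose,
    smul_smul, ← sq, div_pow, one_pow, Real.sq_sqrt (by positivity), one_div_mul_cancel hab,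
    one_smul]

theorem potential_mul_eigenbasis {γ α β : ℝ} (h1 : α + γ*β = 1) (h2 : γ*α^2 + 2*β^2 = 2*β) :
    !![α - γ*β, γ*α; γ*α, β] * !![α, 2*β; -(2*β), α]ᵀ =
      !![α, 2*β; -(2*β), α]ᵀ * !![(1 : ℝ), 0; 0, (1 - 2*γ)*β] := by
  ext i j
  fin_cases i <;> fin_cases j <;>
    simp only [Fin.zero_eta, Fin.mk_one, Fin.isValue, mul_apply, Fin.sum_univ_two,
      transpose_apply, of_apply, cons_val', cons_val_zero, cons_val_one, cons_val_fin_one]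
  · linear_combination α * h1
  · linear_combination h2 - 2 * β * h1
  · linear_combination h2
  · ring

theorem stmt_5 (γ α β : ℝ) (h : (α, β) ≠ (0, 0))
    (h1 : α + γ*β = 1) (h2 : γ*α^2 + 2*β^2 = 2*β)
    (B : Matrix (Fin 2) (Fin 2) ℝ)
    (hB : B = (1 / Real.sqrt (α^2 + 4*β^2)) • !![α, 2*β; -(2*β), α]) :
    B * !![α - γ*β, γ*α; γ*α, β] * Bᵀ = !![(1 : ℝ), 0; 0, (1 - 2*γ)*β] := by
  have hs : α ^ 2 + (2*β) ^ 2 ≠ 0 := by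
    contrapose! h
    have hα : α = 0 := by nlinarith [sq_nonneg α, sq_nonneg (2*β)]
    have hβ : β = 0 := by nlinarith [sq_nonneg α, sq_nonneg (2*β)]
    rw [hα, hβ]
  rw [show α^2 + 4*β^2 = α ^ 2 + (2*β) ^ 2 by ring] at hB
  subst hB
  refine mul_mul_eq_of_mul_eq_one_of_mul_eq_mul (unit_rotScale_mul_transpose hs) ?_
  rw [transpose_smul, Matrix.mul_smul, potential_mul_eigenbasis h1 h2, Matrix.smul_mul]
end

section
/- Let ω < −γ²/4 with γ > 0 and 1 < p < ∞. Set b_ω = (2/((p−1)√(−ω)))·tanh⁻¹(γ/(2√(−ω))), and let φ_ω(x) = ψ(x − b_ω) for x ≥ 0 and φ_ω(x) = ψ(x + b_ω) for x < 0, where ψ(x) = (−(p+1)ω/2)^{1/(p−1)}·(cosh((p−1)√(−ω)x/2))^{−2/(p−1)}. Then φ_ω is continuous on ℝ, smooth away from 0, solves −φ'' − ωφ − φ^p = 0 on ℝ∖{0}, and satisfies the jump condition φ_ω'(0⁺) − φ_ω'(0⁻) = γ·φ_ω(0). -/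
/-- `tanh⁻¹ z = (1/2)·log((1+z)/(1-z))`, the inverse hyperbolic tangent. -/
noncomputable def artanh (z : ℝ) : ℝ := (1/2) * Real.log ((1 + z) / (1 - z))

lemma tanh_artanh {z : ℝ} (h0 : 0 < z) (h1 : z < 1) : Real.tanh (artanh z) = z := by
  have h1z : 0 < 1 - z := by linarith
  have h2z : 0 < 1 + z := by linarith
  have hr : 0 < (1 + z) / (1 - z) := div_pos h2z h1z
  set u := Real.exp (artanh z) with hu
  have hupos : 0 < u := Real.exp_pos _
  have hu2 : u ^ 2 = (1 + z) / (1 - z) := by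
    rw [hu, ← Real.exp_nat_mul]
    rw [artanh]
    rw [show (2:ℕ) * ((1/2) * Real.log ((1 + z) / (1 - z))) = Real.log ((1+z)/(1-z)) by
      push_cast; ring]
    exact Real.exp_log hr
  have hu2' : u ^ 2 * (1 - z) = 1 + z := by rw [hu2]; field_simp
  rw [Real.tanh_eq_sinh_div_cosh, Real.sinh_eq, Real.cosh_eq, ← hu, Real.exp_neg, ← hu]
  rw [div_eq_iff (by positivity)]
  field_simp
  nlinarith [hu2']

theorem stmt_7 (γ ω p : ℝ) (hγ : 0 < γ) (hω : ω < -γ^2/4) (hp : 1 < p)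
    (b : ℝ) (hb : b = (2 / ((p-1) * Real.sqrt (-ω))) * artanh (γ / (2 * Real.sqrt (-ω))))
    (ψ φ : ℝ → ℝ)
    (hψ : ∀ x, ψ x = (-(p+1)*ω/2) ^ (1/(p-1)) *
      (Real.cosh ((p-1) * Real.sqrt (-ω) * x / 2)) ^ (-(2/(p-1))))
    (hφ : ∀ x, φ x = if 0 ≤ x then ψ (x - b) else ψ (x + b)) :
    Continuous φ ∧
    ContDiffOn ℝ (⊤ : ℕ∞) φ {(0:ℝ)}ᶜ ∧
    (∀ x ≠ (0:ℝ), -(deriv (deriv φ) x) - ω * φ x - φ x ^ p = 0) ∧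
    derivWithin φ (Set.Ici 0) 0 - derivWithin φ (Set.Iic 0) 0 = γ * φ 0 := by
  have hs0 : (0:ℝ) < -ω := by nlinarith
  set s := Real.sqrt (-ω) with hsdef
  have hs : 0 < s := Real.sqrt_pos.mpr hs0
  have hs2 : s^2 = -ω := Real.sq_sqrt hs0.le
  have hp1 : (0:ℝ) < p - 1 := by linarith
  set c := (p-1)*s/2 with hcdef
  have hc : 0 < c := by positivity
  set r := -(2/(p-1)) with hrdef
  set t := -(p+1)*ω/2 with htdef
  have ht : 0 < t := by nlinarith
  set A := t ^ (1/(p-1)) with hAdef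
  have hA : 0 < A := Real.rpow_pos_of_pos ht _
  set F : ℝ → ℝ := fun x => A * Real.cosh (c*x) ^ r with hF
  set F1 : ℝ → ℝ := fun x => (A*r*c) * (Real.cosh (c*x) ^ (r-1) * Real.sinh (c*x)) with hF1
  set F2 : ℝ → ℝ := fun x => (A*r*c) *
      ((r-1) * Real.cosh (c*x) ^ (r-1-1) * (Real.sinh (c*x) * c) * Real.sinh (c*x)
        + Real.cosh (c*x) ^ (r-1) * (Real.cosh (c*x) * c)) with hF2
  have hψ2 : ∀ x, ψ x = F (x) := by
    intro x
    rw [hψ, hF, show (p-1)*s*x/2 = c*x by rw [hcdef]; ring]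
  have hφf : φ = fun x => if (0:ℝ) ≤ x then F (x - b) else F (x + b) := by
    funext x; rw [hφ]; split_ifs <;> rw [hψ2]
  -- derivatives of F
  have hcd : ∀ x : ℝ, HasDerivAt (fun y => c*y) c x := by
    intro x; simpa using (hasDerivAt_id x).const_mul c
  have hcosh : ∀ x : ℝ, HasDerivAt (fun y => Real.cosh (c*y)) (Real.sinh (c*x) * c) x := by
    intro x; exact (Real.hasDerivAt_cosh (c*x)).comp x (hcd x)
  have hsinh : ∀ x : ℝ, HasDerivAt (fun y => Real.sinh (c*y)) (Real.cosh (c*x) * c) x := by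
    intro x; exact (Real.hasDerivAt_sinh (c*x)).comp x (hcd x)
  have hpow : ∀ x : ℝ, HasDerivAt (fun y => Real.cosh (c*y) ^ r)
      (r * Real.cosh (c*x) ^ (r-1) * (Real.sinh (c*x) * c)) x := by
    intro x
    exact (Real.hasDerivAt_rpow_const (p := r) (Or.inl (Real.cosh_pos (c*x)).ne')).comp x (hcosh x)
  have hpow1 : ∀ x : ℝ, HasDerivAt (fun y => Real.cosh (c*y) ^ (r-1))
      ((r-1) * Real.cosh (c*x) ^ (r-1-1) * (Real.sinh (c*x) * c)) x := by
    intro x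
    exact (Real.hasDerivAt_rpow_const (p := r-1)
      (Or.inl (Real.cosh_pos (c*x)).ne')).comp x (hcosh x)
  have hF' : ∀ x : ℝ, HasDerivAt F (F1 x) x := by
    intro x
    have := (hpow x).const_mul A
    exact this.congr_deriv (by rw [hF1]; ring)
  have hF1' : ∀ x : ℝ, HasDerivAt F1 (F2 x) x := by
    intro x
    exact ((hpow1 x).mul (hsinh x)).const_mul (A*r*c)
  -- the ODE for F
  have hODE : ∀ x : ℝ, -(F2 x) - ω * F x - F x ^ p = 0 := by
    intro x
    set u := Real.cosh (c*x) with hudef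
    set S := Real.sinh (c*x) with hSdef
    have hu : 0 < u := Real.cosh_pos _
    have e1 : S^2 = u^2 - 1 := Real.sinh_sq (c*x)
    have hstep : ∀ y : ℝ, u ^ y * u = u ^ (y+1) := fun y => (Real.rpow_add_one hu.ne' y).symm
    have e2 : u^(r-1-1) * u^2 = u^r := by
      rw [sq, ← mul_assoc, hstep, hstep]; norm_num
    have e3 : u^(r-1) * u = u^r := by rw [hstep]; norm_num
    have e4 : F x ^ p = A * t * u^(r-1-1) := by
      rw [hF]
      have h1 : (A * u ^ r) ^ p = A ^ p * (u ^ r) ^ p :=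
        Real.mul_rpow hA.le (Real.rpow_nonneg hu.le r)
      have h2 : (u ^ r) ^ p = u ^ (r * p) := (Real.rpow_mul hu.le r p).symm
      have h3 : r * p = r - 1 - 1 := by rw [hrdef]; field_simp; ring
      have h4 : A ^ p = A * t := by
        rw [hAdef, ← Real.rpow_mul ht.le,
          show 1/(p-1) * p = 1/(p-1) + 1 by field_simp; ring,
          Real.rpow_add ht, Real.rpow_one]
      rw [h1, h2, h3, h4]
    -- coefficient identities
    have e6 : r^2 * c^2 = -ω := by
      rw [← hs2, hrdef, hcdef]; field_simp
    have e7 : r * (r-1) * c^2 = t := by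
      rw [htdef, show -(p+1)*ω/2 = (p+1)*(-ω)/2 by ring, ← hs2, hrdef, hcdef]
      field_simp; ring
    rw [hF2, hF, e4]
    simp only [← hudef, ← hSdef]
    linear_combination (-(A*r*(r-1)*c^2) * u^(r-1-1)) * e1 + (-(A*r*(r-1)*c^2)) * e2
      + (-(A*r*c^2)) * e3 + (-(A * u^r)) * e6 + (A * u^(r-1-1)) * e7
  -- evenness of F
  have hFeven : ∀ y : ℝ, F (-y) = F y := by
    intro y
    simp only [hF]
    rw [show c * (-y) = -(c*y) by ring, Real.cosh_neg]
  -- smoothness of F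
  have hFsmooth : ContDiff ℝ (⊤ : ℕ∞) F := by
    have h1 : ContDiff ℝ (⊤ : ℕ∞) (fun x : ℝ => Real.cosh (c*x)) :=
      Real.contDiff_cosh.comp (contDiff_const.mul contDiff_id)
    rw [hF]
    exact contDiff_const.mul (contDiff_iff_contDiffAt.mpr fun x =>
      (h1.contDiffAt).rpow_const_of_ne (Real.cosh_pos (c*x)).ne')
  set G : ℝ → ℝ := fun y => F (y - b) with hG
  set H : ℝ → ℝ := fun y => F (y + b) with hH
  have hG' : ∀ y : ℝ, HasDerivAt G (F1 (y - b)) y := by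
    intro y; exact ((hF' (y - b)).comp y ((hasDerivAt_id y).sub_const b)).congr_deriv (mul_one _)
  have hG1' : ∀ y : ℝ, HasDerivAt (fun z => F1 (z - b)) (F2 (y - b)) y := by
    intro y; exact ((hF1' (y - b)).comp y ((hasDerivAt_id y).sub_const b)).congr_deriv (mul_one _)
  have hH' : ∀ y : ℝ, HasDerivAt H (F1 (y + b)) y := by
    intro y; exact ((hF' (y + b)).comp y ((hasDerivAt_id y).add_const b)).congr_deriv (mul_one _)
  have hH1' : ∀ y : ℝ, HasDerivAt (fun z => F1 (z + b)) (F2 (y + b)) y := by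
    intro y; exact ((hF1' (y + b)).comp y ((hasDerivAt_id y).add_const b)).congr_deriv (mul_one _)
  have hGd : deriv G = fun y => F1 (y - b) := funext fun y => (hG' y).deriv
  have hGdd : ∀ y : ℝ, deriv (deriv G) y = F2 (y - b) := by
    intro y; rw [hGd]; exact (hG1' y).deriv
  have hHd : deriv H = fun y => F1 (y + b) := funext fun y => (hH' y).deriv
  have hHdd : ∀ y : ℝ, deriv (deriv H) y = F2 (y + b) := by
    intro y; rw [hHd]; exact (hH1' y).deriv
  have hHsm : ContDiff ℝ (⊤ : ℕ∞) H := by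
    rw [hH]; exact hFsmooth.comp (contDiff_id.add contDiff_const)
  have hGsm : ContDiff ℝ (⊤ : ℕ∞) G := by
    rw [hG]; exact hFsmooth.comp (contDiff_id.sub contDiff_const)
  -- eventual equalities away from 0
  have hevG : ∀ x : ℝ, 0 < x → φ =ᶠ[nhds x] G := by
    intro x h
    filter_upwards [Ioi_mem_nhds h] with y hy
    rw [hφf]; simp only [hG]; rw [if_pos (le_of_lt hy)]
  have hevH : ∀ x : ℝ, x < 0 → φ =ᶠ[nhds x] H := by
    intro x h
    filter_upwards [Iio_mem_nhds h] with y hy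
    rw [hφf]; simp only [hH]; rw [if_neg (not_le.mpr hy)]
  -- continuity
  have hcont : Continuous φ := by
    rw [hφf]
    apply Continuous.if_le
      (hFsmooth.continuous.comp (continuous_id.sub continuous_const))
      (hFsmooth.continuous.comp (continuous_id.add continuous_const))
      continuous_const continuous_id
    intro x hx
    simp only [id_eq] at hx
    subst hx
    simpa using hFeven b
  -- smoothness away from 0
  have hsm : ContDiffOn ℝ (⊤ : ℕ∞) φ {(0:ℝ)}ᶜ := by
    intro x hx
    have hx0 : x ≠ 0 := hx
    rcases hx0.lt_or_gt with h | h
    · exact ((hHsm.contDiffAt).congr_of_eventuallyEq (hevH x h)).contDiffWithinAt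
    · exact ((hGsm.contDiffAt).congr_of_eventuallyEq (hevG x h)).contDiffWithinAt
  -- the ODE for φ
  have hode : ∀ x ≠ (0:ℝ), -(deriv (deriv φ) x) - ω * φ x - φ x ^ p = 0 := by
    intro x hx
    rcases hx.lt_or_gt with h | h
    · have h2 : deriv (deriv φ) x = deriv (deriv H) x := ((hevH x h).deriv).deriv_eq
      rw [h2, hHdd x, hφ x, if_neg (not_le.mpr h), hψ2]
      exact hODE (x + b)
    · have h2 : deriv (deriv φ) x = deriv (deriv G) x := ((hevG x h).deriv).deriv_eq
      rw [h2, hGdd x, hφ x, if_pos (le_of_lt h), hψ2]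
      exact hODE (x - b)
  -- the jump condition
  have hIci : derivWithin φ (Set.Ici 0) 0 = F1 (0 - b) := by
    have heq : Set.EqOn φ G (Set.Ici 0) := by
      intro y hy; rw [hφf]; simp only [hG]; rw [if_pos (Set.mem_Ici.mp hy)]
    rw [derivWithin_congr heq (heq Set.self_mem_Ici)]
    exact ((hG' 0).hasDerivWithinAt).derivWithin (uniqueDiffOn_Ici 0 0 Set.self_mem_Ici)
  have hIic : derivWithin φ (Set.Iic 0) 0 = F1 (0 + b) := by
    have heq : Set.EqOn φ H (Set.Iic 0) := by
      intro y hy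
      rcases lt_or_eq_of_le (Set.mem_Iic.mp hy) with h | h
      · rw [hφf]; simp only [hH]; rw [if_neg (not_le.mpr h)]
      · subst h
        rw [hφf]; simp only [hH]; rw [if_pos le_rfl,
          show (0:ℝ) - b = -b by ring, show (0:ℝ) + b = b by ring]
        exact hFeven b
    rw [derivWithin_congr heq (heq Set.self_mem_Iic)]
    exact ((hH' 0).hasDerivWithinAt).derivWithin (uniqueDiffOn_Iic 0 0 Set.self_mem_Iic)
  have hjump : derivWithin φ (Set.Ici 0) 0 - derivWithin φ (Set.Iic 0) 0 = γ * φ 0 := by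
    rw [hIci, hIic, hφ 0, if_pos le_rfl, hψ2,
      show (0:ℝ) - b = -b by ring, show (0:ℝ) + b = b by ring]
    set z := γ / (2*s) with hzdef
    have hz0 : 0 < z := by positivity
    have hz1 : z < 1 := by
      rw [hzdef, div_lt_one (by positivity)]
      have h1 : γ^2 < (2*s)^2 := by nlinarith [hs2]
      exact lt_of_pow_lt_pow_left₀ 2 (by positivity) h1
    have hcb : c * b = artanh z := by
      rw [hb, hcdef]; field_simp
    have htanh : Real.sinh (c*b) = z * Real.cosh (c*b) := by
      have h := tanh_artanh hz0 hz1
      rw [← hcb, Real.tanh_eq_sinh_div_cosh,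
        div_eq_iff (Real.cosh_pos (c*b)).ne'] at h
      exact h
    have hkey : (-2)*r*c*z = γ := by
      rw [hrdef, hcdef, hzdef]; field_simp
    simp only [hF1, hF]
    rw [show c * (-b) = -(c*b) by ring, Real.cosh_neg, Real.sinh_neg]
    have hcc : Real.cosh (c*b) ^ r = Real.cosh (c*b) ^ (r-1) * Real.cosh (c*b) := by
      rw [← Real.rpow_add_one (Real.cosh_pos (c*b)).ne']; norm_num
    rw [hcc, htanh]
    linear_combination (A * Real.cosh (c*b) ^ (r-1) * Real.cosh (c*b)) * hkey
  exact ⟨hcont, hsm, hode, hjump⟩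
end

section
/- With ψ and f as above, f'(s) = −p(p−1)·∫₀^∞ ψ(y+s)^{p−2}·ψ'(y+s)·(ψ'(y))² dy, and f'(0) > 0. -/
/-!
With `c = (-(p+1)ω/2)^(1/(p-1))`, `k = (p-1)√(-ω)/2` and `m = 2/(p-1)` we have
`ψ = c sech(k·)^m`, so `ψ' = -m k tanh(k·) ψ` and `ψ'' = m k² ((m+1) tanh²(k·) - 1) ψ` are
bounded multiples of the exponentially decaying `ψ`; hence `ψ'²` and `ψ''²` are integrable on
`(0, ∞)`. Only the factor `ψ(y+s)^(p-1)` of the integrand of `f` depends on `s`, and its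
derivative `(p-1) ψ^(p-2) ψ' = -(p-1) m k tanh(k·) ψ^(p-1)` is bounded even when `p < 2`, so
dominated convergence with a multiple of `ψ'(y)²` as majorant differentiates under the integral.
At `s = 0` the integrand `ψ^(p-2) ψ' ψ'²` is negative on `(0, ∞)`, because `ψ' < 0` there.
-/

open MeasureTheory Real Set

theorem Real.hasDerivAt_tanh (x : ℝ) : HasDerivAt tanh (1 - tanh x ^ 2) x := by
  have h := (hasDerivAt_sinh x).div (hasDerivAt_cosh x) (cosh_pos x).ne'
  refine (h.congr_deriv ?_).congr_of_eventuallyEq (.of_forall tanh_eq_sinh_div_cosh)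
  rw [tanh_eq_sinh_div_cosh, div_pow, one_sub_div (pow_ne_zero 2 (cosh_pos x).ne')]
  ring

theorem hasDerivAt_integral_add_mul_comp_add {μ : Measure ℝ} {A B g g' : ℝ → ℝ} {M C : ℝ}
    (hA : Integrable A μ) (hB : Integrable B μ) (hg : ∀ x, HasDerivAt g (g' x) x)
    (hgM : ∀ x, |g x| ≤ M) (hg'C : ∀ x, |g' x| ≤ C) (s : ℝ) :
    HasDerivAt (fun t => ∫ y, A y + B y * g (y + t) ∂μ) (∫ y, B y * g' (y + s) ∂μ) s := by
  have hg_cont : Continuous g := continuous_iff_continuousAt.2 fun x => (hg x).continuousAt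
  have hg'_meas : Measurable g' := by
    rw [show g' = deriv g from funext fun x => (hg x).deriv.symm]
    exact measurable_deriv g
  have hF_int : ∀ t, Integrable (fun y => A y + B y * g (y + t)) μ := fun t =>
    hA.add <| hB.mul_bdd (hg_cont.comp (continuous_add_const t)).aestronglyMeasurable
      (ae_of_all _ fun y => hgM (y + t))
  refine (hasDerivAt_integral_of_dominated_loc_of_deriv_le (bound := fun y => ‖B y‖ * C)
    (F' := fun t y => B y * g' (y + t))
    Filter.univ_mem (.of_forall fun t => (hF_int t).aestronglyMeasurable) (hF_int s)
    (hB.aestronglyMeasurable.mul (hg'_meas.comp (measurable_add_const s)).aestronglyMeasurable)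
    (ae_of_all _ fun y t _ => ?_) (hB.norm.mul_const C) (ae_of_all _ fun y t _ => ?_)).2
  · rw [norm_mul]
    exact mul_le_mul_of_nonneg_left (hg'C (y + t)) (norm_nonneg _)
  · have hshift := (hg (y + t)).comp t ((hasDerivAt_id t).const_add y)
    simpa using (hshift.const_mul (B y)).const_add (A y)

theorem integrableOn_sq_of_abs_le_mul {φ h : ℝ → ℝ} {s : Set ℝ} {C M : ℝ}
    (hφ : IntegrableOn φ s) (hφM : ∀ x, φ x ≤ M) (hh : Measurable h) (hC : 0 ≤ C)
    (hhφ : ∀ x, |h x| ≤ C * φ x) : IntegrableOn (fun x => h x ^ 2) s := by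
  have hh_int : IntegrableOn h s :=
    (hφ.const_mul C).mono' hh.aestronglyMeasurable (ae_of_all _ hhφ)
  simp only [sq]
  exact hh_int.mul_bdd hh.aestronglyMeasurable
    (ae_of_all _ fun x => (hhφ x).trans (mul_le_mul_of_nonneg_left (hφM x) hC))

theorem setIntegral_Ioi_neg {h : ℝ → ℝ} {a : ℝ} (hh : IntegrableOn h (Ioi a))
    (hneg : ∀ x, a < x → h x < 0) : ∫ x in Ioi a, h x < 0 := by
  have hpos : 0 < ∫ x in Ioi a, -h x := by
    refine (setIntegral_pos_iff_support_of_nonneg_ae ?_ hh.neg).2 ?_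
    · filter_upwards [ae_restrict_mem measurableSet_Ioi] with x hx
      exact (neg_pos.2 (hneg x hx)).le
    · have hsupp : Ioi a ⊆ Function.support h := fun x hx => (hneg x hx).ne
      simp [inter_eq_right.2 hsupp]
  rwa [integral_neg, neg_pos] at hpos

noncomputable def sechPow (c k m x : ℝ) : ℝ := c * cosh (k * x) ^ (-m)

section sechPow

variable {c k m : ℝ}

theorem sechPow_pos (hc : 0 < c) (x : ℝ) : 0 < sechPow c k m x :=
  mul_pos hc (rpow_pos_of_pos (cosh_pos _) _)

theorem sechPow_le (hc : 0 ≤ c) (hm : 0 ≤ m) (x : ℝ) : sechPow c k m x ≤ c :=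
  mul_le_of_le_one_right hc (rpow_le_one_of_one_le_of_nonpos (one_le_cosh _) (neg_nonpos.2 hm))

theorem hasDerivAt_sechPow (x : ℝ) :
    HasDerivAt (sechPow c k m) (-(m * k) * tanh (k * x) * sechPow c k m x) x := by
  have hcosh : HasDerivAt (fun x => cosh (k * x)) (sinh (k * x) * k) x :=
    (hasDerivAt_cosh _).comp x ((hasDerivAt_id x).const_mul k |>.congr_deriv (mul_one k))
  refine ((hcosh.rpow_const (p := -m) (.inl (cosh_pos _).ne')).const_mul c).congr_deriv ?_
  rw [sechPow, tanh_eq_sinh_div_cosh, rpow_sub_one (cosh_pos _).ne']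
  ring

theorem differentiable_sechPow : Differentiable ℝ (sechPow c k m) :=
  fun x => (hasDerivAt_sechPow x).differentiableAt

theorem deriv_sechPow :
    deriv (sechPow c k m) = fun x => -(m * k) * tanh (k * x) * sechPow c k m x :=
  funext fun x => (hasDerivAt_sechPow x).deriv

theorem deriv_deriv_sechPow :
    deriv (deriv (sechPow c k m)) =
      fun x => m * k ^ 2 * ((m + 1) * tanh (k * x) ^ 2 - 1) * sechPow c k m x := by
  refine funext fun x => HasDerivAt.deriv ?_
  rw [deriv_sechPow]
  have htanh : HasDerivAt (fun x => tanh (k * x)) ((1 - tanh (k * x) ^ 2) * k) x :=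
    (hasDerivAt_tanh _).comp x ((hasDerivAt_id x).const_mul k |>.congr_deriv (mul_one k))
  refine ((htanh.const_mul (-(m * k))).mul (hasDerivAt_sechPow x)).congr_deriv ?_
  ring

theorem abs_deriv_sechPow_le (hc : 0 ≤ c) (hk : 0 ≤ k) (hm : 0 ≤ m) (x : ℝ) :
    |deriv (sechPow c k m) x| ≤ m * k * sechPow c k m x := by
  have hψ : 0 ≤ sechPow c k m x := mul_nonneg hc (rpow_nonneg (cosh_pos _).le _)
  rw [deriv_sechPow, abs_mul, abs_mul, abs_neg, abs_of_nonneg (mul_nonneg hm hk),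
    abs_of_nonneg hψ]
  exact mul_le_mul_of_nonneg_right
    (mul_le_of_le_one_right (mul_nonneg hm hk) (abs_tanh_lt_one _).le) hψ

theorem abs_deriv_deriv_sechPow_le (hc : 0 ≤ c) (hm : 0 ≤ m) (x : ℝ) :
    |deriv (deriv (sechPow c k m)) x| ≤ m * k ^ 2 * (m + 1) * sechPow c k m x := by
  have hψ : 0 ≤ sechPow c k m x := mul_nonneg hc (rpow_nonneg (cosh_pos _).le _)
  have ht : tanh (k * x) ^ 2 ≤ 1 := (tanh_sq_lt_one _).le
  have ht0 : 0 ≤ tanh (k * x) ^ 2 := sq_nonneg _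
  rw [deriv_deriv_sechPow, abs_mul, abs_mul, abs_of_nonneg (by positivity), abs_of_nonneg hψ]
  gcongr
  exact abs_le.2 ⟨by nlinarith, by nlinarith⟩

theorem deriv_sechPow_neg (hc : 0 < c) (hk : 0 < k) (hm : 0 < m) {x : ℝ} (hx : 0 < x) :
    deriv (sechPow c k m) x < 0 := by
  have htanh : 0 < tanh (k * x) := by
    rw [tanh_eq_sinh_div_cosh]
    exact div_pos (sinh_pos_iff.2 (mul_pos hk hx)) (cosh_pos _)
  rw [deriv_sechPow]
  exact mul_neg_of_neg_of_pos (mul_neg_of_neg_of_pos (by nlinarith) htanh) (sechPow_pos hc x)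

theorem hasDerivAt_sechPow_rpow (hc : 0 < c) (q x : ℝ) :
    HasDerivAt (fun x => sechPow c k m x ^ q)
      (q * (sechPow c k m x ^ (q - 1) * deriv (sechPow c k m) x)) x :=
  ((hasDerivAt_sechPow x).rpow_const (.inl (sechPow_pos hc x).ne')).congr_deriv
    (by rw [deriv_sechPow]; ring)

theorem abs_sechPow_rpow_le (hc : 0 < c) (hm : 0 ≤ m) {q : ℝ} (hq : 0 ≤ q) (x : ℝ) :
    |sechPow c k m x ^ q| ≤ c ^ q := by
  rw [abs_of_pos (rpow_pos_of_pos (sechPow_pos hc x) _)]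
  exact rpow_le_rpow (sechPow_pos hc x).le (sechPow_le hc.le hm x) hq

theorem abs_sechPow_rpow_mul_deriv_le (hc : 0 < c) (hk : 0 ≤ k) (hm : 0 ≤ m) {q : ℝ}
    (hq : 0 ≤ q) (x : ℝ) :
    |sechPow c k m x ^ (q - 1) * deriv (sechPow c k m) x| ≤ m * k * c ^ q := by
  have hψ := sechPow_pos (k := k) (m := m) hc x
  calc |sechPow c k m x ^ (q - 1) * deriv (sechPow c k m) x|
      = m * k * |tanh (k * x)| * |sechPow c k m x ^ q| := by
        rw [deriv_sechPow, rpow_sub_one hψ.ne', abs_mul, abs_mul, abs_mul, abs_neg, abs_div,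
          abs_of_nonneg (mul_nonneg hm hk), abs_of_pos hψ]
        field_simp
    _ ≤ m * k * 1 * c ^ q := by
        gcongr
        · exact (abs_tanh_lt_one _).le
        · exact abs_sechPow_rpow_le hc hm hq x
    _ = m * k * c ^ q := by rw [mul_one]

theorem integrableOn_sechPow (hk : 0 < k) (hm : 0 < m) : IntegrableOn (sechPow c k m) (Ioi 0) := by
  refine ((exp_neg_integrableOn_Ioi 0 (mul_pos hm hk)).const_mul (|c| * 2 ^ m)).mono'
    differentiable_sechPow.continuous.aestronglyMeasurable
    (ae_of_all _ fun x => ?_)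
  have hexp : exp (k * x) / 2 ≤ cosh (k * x) := by
    rw [cosh_eq]; linarith [(exp_pos (-(k * x))).le]
  calc ‖sechPow c k m x‖ = |c| * cosh (k * x) ^ (-m) := by
        rw [sechPow, norm_mul, norm_eq_abs, norm_of_nonneg (rpow_nonneg (cosh_pos _).le _)]
    _ ≤ |c| * (exp (k * x) / 2) ^ (-m) :=
        mul_le_mul_of_nonneg_left
          (rpow_le_rpow_of_nonpos (by positivity) hexp (neg_nonpos.2 hm.le)) (abs_nonneg c)
    _ = |c| * 2 ^ m * exp (-(m * k) * x) := by
        rw [div_rpow (exp_pos _).le zero_le_two, ← exp_mul, rpow_neg zero_le_two, div_inv_eq_mul]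
        ring_nf

theorem integrableOn_sq_deriv_sechPow (hc : 0 < c) (hk : 0 < k) (hm : 0 < m) :
    IntegrableOn (fun x => deriv (sechPow c k m) x ^ 2) (Ioi 0) :=
  integrableOn_sq_of_abs_le_mul (integrableOn_sechPow hk hm) (sechPow_le hc.le hm.le)
    (measurable_deriv _) (by positivity) (abs_deriv_sechPow_le hc.le hk.le hm.le)

theorem integrableOn_sq_deriv_deriv_sechPow (hc : 0 < c) (hk : 0 < k) (hm : 0 < m) :
    IntegrableOn (fun x => deriv (deriv (sechPow c k m)) x ^ 2) (Ioi 0) :=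
  integrableOn_sq_of_abs_le_mul (integrableOn_sechPow hk hm) (sechPow_le hc.le hm.le)
    (measurable_deriv _) (by positivity) (abs_deriv_deriv_sechPow_le hc.le hm.le)

end sechPow

theorem stmt_9 (ω p : ℝ) (hω : ω < 0) (hp : 1 < p)
    (ψ : ℝ → ℝ)
    (hψ : ∀ x, ψ x = (-(p+1)*ω/2) ^ (1/(p-1)) *
      (Real.cosh ((p-1) * Real.sqrt (-ω) * x / 2)) ^ (-(2/(p-1))))
    (f : ℝ → ℝ)
    (hf : ∀ s, f s = ∫ y in Set.Ioi (0:ℝ),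
      ((deriv (deriv ψ) y)^2 - ω * (deriv ψ y)^2 - p * ψ (y + s) ^ (p-1) * (deriv ψ y)^2)) :
    (∀ s, HasDerivAt f
      (-(p * (p-1)) * ∫ y in Set.Ioi (0:ℝ),
        ψ (y + s) ^ (p-2) * deriv ψ (y + s) * (deriv ψ y)^2) s) ∧
    0 < deriv f 0 := by
  set c := (-(p+1)*ω/2) ^ (1/(p-1))
  set k := (p-1) * √(-ω) / 2
  set m := 2/(p-1)
  have hc : 0 < c := rpow_pos_of_pos (by nlinarith) _
  have hk : 0 < k := div_pos (mul_pos (by linarith) (sqrt_pos.2 (by linarith))) two_pos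
  have hm : 0 < m := div_pos two_pos (by linarith)
  obtain rfl : ψ = sechPow c k m := funext fun x => by
    rw [hψ, sechPow, show (p-1) * √(-ω) * x / 2 = k * x by ring]
  have hI := integrableOn_sq_deriv_sechPow hc hk hm
  have hg' (x : ℝ) := hasDerivAt_sechPow_rpow (k := k) (m := m) hc (p-1) x
  have hB (x : ℝ) := abs_sechPow_rpow_mul_deriv_le hc hk.le hm.le (q := p-1) (by linarith) x
  simp only [show p - 1 - 1 = p - 2 by ring] at hg' hB
  have hg'_le (x : ℝ) : |(p-1) * (sechPow c k m x ^ (p-2) * deriv (sechPow c k m) x)| ≤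
      (p-1) * (m * k * c ^ (p-1)) := by
    rw [abs_mul, abs_of_pos (sub_pos.2 hp)]
    exact mul_le_mul_of_nonneg_left (hB x) (sub_pos.2 hp).le
  have hderiv (s : ℝ) : HasDerivAt f (-(p * (p-1)) * ∫ y in Ioi 0,
      sechPow c k m (y + s) ^ (p-2) * deriv (sechPow c k m) (y + s) *
        deriv (sechPow c k m) y ^ 2) s := by
    rw [show f = _ from funext hf]
    convert hasDerivAt_integral_add_mul_comp_add
      ((integrableOn_sq_deriv_deriv_sechPow hc hk hm).sub (hI.const_mul ω)) (hI.const_mul (-p))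
      hg' (abs_sechPow_rpow_le hc hm.le (sub_pos.2 hp).le) hg'_le s using 1
    · funext t; congr 1; funext y; simp only [Pi.sub_apply]; ring
    · rw [← integral_const_mul]; congr 1; funext y; ring
  refine ⟨hderiv, ?_⟩
  rw [(hderiv 0).deriv]
  simp only [add_zero]
  refine mul_pos_of_neg_of_neg (by nlinarith) (setIntegral_Ioi_neg ?_ fun y hy => ?_)
  · exact hI.bdd_mul (((differentiable_sechPow.continuous.measurable.pow_const _).mul
      (measurable_deriv _)).aestronglyMeasurable) (ae_of_all _ hB)
  · have hψ' := deriv_sechPow_neg hc hk hm hy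
    exact mul_neg_of_neg_of_pos
      (mul_neg_of_pos_of_neg (rpow_pos_of_pos (sechPow_pos hc y) _) hψ') (sq_pos_of_neg hψ')
end

section
/- Let X be a real Hilbert space with a second continuous inner product (·,·)_H, and let S''(φ) : X → X* be a bounded symmetric operator. Suppose there exist ψ ∈ X with ‖ψ‖_H = 1 and λ ≤ 0, μ ∈ ℝ with S''(φ)ψ = λ·Iψ + μ·Iφ (I the H-Riesz map), and suppose ⟨S''(φ)p, p⟩ > 0 for all nonzero p with (χ, p)_H = (Jφ, p)_H = 0, where χ is an H-normalized eigenvector with negative eigenvalue. If additionally (φ,ψ)_H = (Jφ,ψ)_H = 0, then ⟨S''(φ)w, w⟩ > 0 for every nonzero w ∈ X with (φ,w)_H = (Jφ,w)_H = (ψ,w)_H = 0. -/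
/-!
If `w` is not positive for `S''(φ)`, pair it with `ψ`: the combination `p = (χ, w) ψ - (χ, ψ) w`
is `H`-orthogonal to `χ` and to `Jφ`, and since `ψ` and `w` are `S''(φ)`-orthogonal,
`⟨S''(φ)p, p⟩ = (χ, w)² ⟨S''(φ)ψ, ψ⟩ + (χ, ψ)² ⟨S''(φ)w, w⟩ ≤ 0`, contradicting positivity
on the complement of `span {χ, Jφ}`.
-/

open scoped RealInnerProductSpace

theorem LinearIndependent.pair_of_apply_ne_zero {K V : Type*} [Field K] [AddCommGroup V]
    [Module K V] (g : V →ₗ[K] K) {x y : V} (hx : g x ≠ 0) (hy : g y = 0) (hy₀ : y ≠ 0) :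
    LinearIndependent K ![x, y] := by
  rw [LinearIndependent.pair_symm_iff, LinearIndependent.pair_iff' hy₀]
  intro a hax
  apply hx
  rw [← hax, map_smul, hy, smul_zero]

namespace LinearMap

variable {𝕜 V : Type*} [Field 𝕜] [LinearOrder 𝕜] [IsStrictOrderedRing 𝕜] [AddCommGroup V]
  [Module 𝕜 V]

theorem apply_self_pos_of_apply_eq_zero_of_nonpos (B : V →ₗ[𝕜] V →ₗ[𝕜] 𝕜)
    (hB : ∀ u v, B u v = B v u) (W : Submodule 𝕜 V) (f : V →ₗ[𝕜] 𝕜)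
    (hpos : ∀ p ∈ W, p ≠ 0 → f p = 0 → 0 < B p p)
    {ψ w : V} (hψ : ψ ∈ W) (hw : w ∈ W) (hψψ : B ψ ψ ≤ 0) (hψw : B ψ w = 0)
    (hind : LinearIndependent 𝕜 ![ψ, w]) :
    0 < B w w := by
  by_cases hfw : f w = 0
  · exact hpos w hw (hind.ne_zero 1) hfw
  by_contra! hww
  set p := f w • ψ - f ψ • w
  have hp₀ : p ≠ 0 := by
    refine fun hp ↦ hfw (LinearIndependent.pair_iff.mp hind (f w) (-f ψ) ?_).1
    rwa [neg_smul, ← sub_eq_add_neg]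
  have hfp : f p = 0 := by simp only [p, map_sub, map_smul, smul_eq_mul]; ring
  have hBp : B p p = f w ^ 2 * B ψ ψ + f ψ ^ 2 * B w w := by
    have hwψ : B w ψ = 0 := by rw [hB]; exact hψw
    simp only [p, map_sub, map_smul, sub_apply, smul_apply, smul_eq_mul,
      hψw, hwψ]
    ring
  have := hpos p (W.sub_mem (W.smul_mem _ hψ) (W.smul_mem _ hw)) hp₀ hfp
  nlinarith [sq_nonneg (f w), sq_nonneg (f ψ)]

end LinearMap

theorem stmt_14_general {X H : Type*}
    [NormedAddCommGroup X] [InnerProductSpace ℝ X]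
    [NormedAddCommGroup H] [InnerProductSpace ℝ H]
    (ι : X →L[ℝ] H)
    (T : X →L[ℝ] X →L[ℝ] ℝ) (hTsymm : ∀ u v : X, T u v = T v u)
    (φ : X) (J : X →L[ℝ] X)
    (ψ : X) (hψ : ‖ι ψ‖ = 1)
    (lam μ : ℝ) (hlam : lam ≤ 0)
    (heig : ∀ v : X, T ψ v = lam * ⟪ι ψ, ι v⟫ + μ * ⟪ι φ, ι v⟫)
    (χ : X)
    (hpos : ∀ p : X, p ≠ 0 → ⟪ι χ, ι p⟫ = 0 → ⟪ι (J φ), ι p⟫ = 0 → 0 < T p p)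
    (hφψ : ⟪ι φ, ι ψ⟫ = 0) (hJφψ : ⟪ι (J φ), ι ψ⟫ = 0) :
    ∀ w : X, w ≠ 0 → ⟪ι φ, ι w⟫ = 0 → ⟪ι (J φ), ι w⟫ = 0 → ⟪ι ψ, ι w⟫ = 0 →
      0 < T w w := by
  intro w hw hφw hJφw hψw
  let innerWith (x : X) : X →ₗ[ℝ] ℝ := innerₛₗ ℝ (ι x) ∘ₗ ι.toLinearMap
  have hψψ : ⟪ι ψ, ι ψ⟫ = 1 := by rw [real_inner_self_eq_norm_sq, hψ, one_pow]
  refine T.toLinearMap₁₂.apply_self_pos_of_apply_eq_zero_of_nonpos hTsymm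
    (LinearMap.ker (innerWith (J φ))) (innerWith χ)
    (fun p hpW hp₀ hχp ↦ hpos p hp₀ hχp hpW) hJφψ hJφw ?_ ?_ ?_
  · change T ψ ψ ≤ 0
    rw [heig, hψψ, hφψ]
    linarith
  · change T ψ w = 0
    rw [heig, hψw, hφw]
    ring
  · refine .pair_of_apply_ne_zero (innerWith ψ) ?_ hψw hw
    change ⟪ι ψ, ι ψ⟫ ≠ 0
    exact hψψ ▸ one_ne_zero

theorem stmt_14 {X H : Type*}
    [NormedAddCommGroup X] [InnerProductSpace ℝ X] [CompleteSpace X]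
    [NormedAddCommGroup H] [InnerProductSpace ℝ H] [CompleteSpace H]
    (ι : X →L[ℝ] H) (hι : Function.Injective ι)
    (T : X →L[ℝ] X →L[ℝ] ℝ) (hTsymm : ∀ u v : X, T u v = T v u)
    (φ : X) (J : X →L[ℝ] X)
    (ψ : X) (hψ : ‖ι ψ‖ = 1)
    (lam μ : ℝ) (hlam : lam ≤ 0)
    (heig : ∀ v : X, T ψ v = lam * ⟪ι ψ, ι v⟫ + μ * ⟪ι φ, ι v⟫)
    (χ : X) (hχ : ‖ι χ‖ = 1) (ν : ℝ) (hν : ν < 0)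
    (hχeig : ∀ v : X, T χ v = ν * ⟪ι χ, ι v⟫)
    (hpos : ∀ p : X, p ≠ 0 → ⟪ι χ, ι p⟫ = 0 → ⟪ι (J φ), ι p⟫ = 0 → 0 < T p p)
    (hφψ : ⟪ι φ, ι ψ⟫ = 0) (hJφψ : ⟪ι (J φ), ι ψ⟫ = 0) :
    ∀ w : X, w ≠ 0 → ⟪ι φ, ι w⟫ = 0 → ⟪ι (J φ), ι w⟫ = 0 → ⟪ι ψ, ι w⟫ = 0 →
      0 < T w w :=
  stmt_14_general ι T hTsymm φ J ψ hψ lam μ hlam heig χ hpos hφψ hJφψ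
end

section
/- Under the setting of the previous statement with d(ω) = E(φ_ω) − ωQ(φ_ω) and S_ω = E − ωQ, one has d'''(ω) = ⟨S_ω'''(φ_ω)(φ_ω', φ_ω'), φ_ω'⟩ − 3‖φ_ω'‖_H². -/
open scoped RealInnerProductSpace

/-!
Differentiate the stationary equation `E'(φ ω) = ω ⟪ι (φ ω), ι ·⟫` along the curve once, testing
against `φ''`, and twice, testing against `φ'`. By the symmetry of `E''` the two results share the
term `E''(φ)(φ', φ'')`, and subtracting them the `ω`-terms cancel as well, leaving
`⟪ι φ, ι φ''⟫ = 2 ‖ι φ'‖² - E'''(φ)(φ', φ', φ')`. Since the derivative of `-⟪ι φ, ι φ'⟫` is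
`-⟪ι φ, ι φ''⟫ - ‖ι φ'‖²`, this is the claim.
-/

section CurveDerivatives

variable {X F : Type*} [NormedAddCommGroup X] [NormedSpace ℝ X]
  [NormedAddCommGroup F] [NormedSpace ℝ F] {γ δ : ℝ → X} {γ' δ' : X} {t : ℝ}

theorem hasDerivAt_clm_comp_apply {G : X → X →L[ℝ] F} (hG : DifferentiableAt ℝ G (γ t))
    (hγ : HasDerivAt γ γ' t) (v : X) :
    HasDerivAt (fun s => G (γ s) v) (fderiv ℝ G (γ t) γ' v) t := by
  simpa using (hG.hasFDerivAt.comp_hasDerivAt t hγ).clm_apply (hasDerivAt_const t v)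

theorem hasDerivAt_clm₂_comp_apply {G : X → X →L[ℝ] X →L[ℝ] F}
    (hG : DifferentiableAt ℝ G (γ t)) (hγ : HasDerivAt γ γ' t) (hδ : HasDerivAt δ δ' t)
    (v : X) :
    HasDerivAt (fun s => G (γ s) (δ s) v) (fderiv ℝ G (γ t) γ' (δ t) v + G (γ t) δ' v) t := by
  have hGγ := HasFDerivAt.comp_hasDerivAt (l := G) t hG.hasFDerivAt hγ
  have h := (hGγ.clm_apply hδ).clm_apply (hasDerivAt_const t v)
  simp only [map_zero, add_zero, add_apply] at h
  exact h

end CurveDerivatives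

section Stationary

variable {X H : Type*} [NormedAddCommGroup X] [NormedSpace ℝ X]
  [NormedAddCommGroup H] [InnerProductSpace ℝ H] (ι : X →L[ℝ] H)

theorem hasFDerivAt_half_mul_norm_sq_comp (u : X) :
    HasFDerivAt (fun x => (1 / 2 : ℝ) * ‖ι x‖ ^ 2) ((innerSL ℝ (ι u)).comp ι) u := by
  simp_rw [← real_inner_self_eq_norm_sq]
  refine ((ι.hasFDerivAt.inner ℝ ι.hasFDerivAt).const_mul (1 / 2 : ℝ)).congr_fderiv ?_
  ext v
  simp only [smul_apply, fderivInnerCLM_apply, ContinuousLinearMap.prod_apply,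
    ContinuousLinearMap.comp_apply, innerSL_apply_apply, smul_eq_mul, real_inner_comm (ι v)]
  ring

variable {ι} {E Q : X → ℝ} (hQ : ∀ u, Q u = (1 / 2) * ‖ι u‖ ^ 2)
include hQ

theorem fderiv_apply_eq_of_fderiv_eq_smul {x : X} {ω : ℝ}
    (hstat : fderiv ℝ E x = ω • fderiv ℝ Q x) (v : X) :
    fderiv ℝ E x v = ω * ⟪ι x, ι v⟫ := by
  have hQx : HasFDerivAt Q ((innerSL ℝ (ι x)).comp ι) x := by
    simpa only [← funext hQ] using hasFDerivAt_half_mul_norm_sq_comp ι x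
  simp [hstat, hQx.fderiv]

variable {Ω : Set ℝ} (hΩ : IsOpen Ω) {φ φ' φ'' : ℝ → X}
  (hφ' : ∀ ω ∈ Ω, HasDerivAt φ (φ' ω) ω)
  (hstat : ∀ ω ∈ Ω, fderiv ℝ E (φ ω) = ω • fderiv ℝ Q (φ ω))
include hΩ hφ' hstat

theorem fderiv_fderiv_apply_eq_of_stationary (hE : ContDiff ℝ 2 E) {ω : ℝ} (hω : ω ∈ Ω)
    (v : X) :
    fderiv ℝ (fderiv ℝ E) (φ ω) (φ' ω) v = ⟪ι (φ ω), ι v⟫ + ω * ⟪ι (φ' ω), ι v⟫ := by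
  have hL := hasDerivAt_clm_comp_apply
    ((hE.fderiv_right (m := 1) (by norm_num)).differentiable (by norm_num) (φ ω)) (hφ' ω hω) v
  have hR := (hasDerivAt_id ω).mul
    ((ι.hasFDerivAt.comp_hasDerivAt ω (hφ' ω hω)).inner ℝ (hasDerivAt_const ω (ι v)))
  have hev : (fun t => fderiv ℝ E (φ t) v) =ᶠ[nhds ω] fun t => t * ⟪ι (φ t), ι v⟫ := by
    filter_upwards [hΩ.mem_nhds hω] with t ht
    exact fderiv_apply_eq_of_fderiv_eq_smul hQ (hstat t ht) v
  rw [(hL.congr_of_eventuallyEq hev.symm).unique hR]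
  simp

theorem fderiv_fderiv_fderiv_apply_eq_of_stationary (hE : ContDiff ℝ 3 E)
    (hφ'' : ∀ ω ∈ Ω, HasDerivAt φ' (φ'' ω) ω) {ω : ℝ} (hω : ω ∈ Ω) (v : X) :
    fderiv ℝ (fderiv ℝ (fderiv ℝ E)) (φ ω) (φ' ω) (φ' ω) v
        + fderiv ℝ (fderiv ℝ E) (φ ω) (φ'' ω) v
      = 2 * ⟪ι (φ' ω), ι v⟫ + ω * ⟪ι (φ'' ω), ι v⟫ := by
  have hE2 : ContDiff ℝ 1 (fderiv ℝ (fderiv ℝ E)) :=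
    (hE.fderiv_right (m := 2) (by norm_num)).fderiv_right (m := 1) (by norm_num)
  have hL := hasDerivAt_clm₂_comp_apply (hE2.differentiable (by norm_num) (φ ω))
    (hφ' ω hω) (hφ'' ω hω) v
  have hR := ((ι.hasFDerivAt.comp_hasDerivAt ω (hφ' ω hω)).inner ℝ
    (hasDerivAt_const ω (ι v))).add ((hasDerivAt_id ω).mul
      ((ι.hasFDerivAt.comp_hasDerivAt ω (hφ'' ω hω)).inner ℝ (hasDerivAt_const ω (ι v))))
  have hev : (fun t => fderiv ℝ (fderiv ℝ E) (φ t) (φ' t) v) =ᶠ[nhds ω]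
      fun t => ⟪ι (φ t), ι v⟫ + t * ⟪ι (φ' t), ι v⟫ := by
    filter_upwards [hΩ.mem_nhds hω] with t ht
    exact fderiv_fderiv_apply_eq_of_stationary hQ hΩ hφ' hstat (hE.of_le (by norm_cast)) ht v
  rw [(hL.congr_of_eventuallyEq hev.symm).unique hR]
  simp only [Function.comp_apply, inner_zero_right, zero_add, one_mul, id_eq]
  ring

theorem inner_second_deriv_eq_of_stationary (hE : ContDiff ℝ 3 E)
    (hφ'' : ∀ ω ∈ Ω, HasDerivAt φ' (φ'' ω) ω) {ω : ℝ} (hω : ω ∈ Ω) :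
    ⟪ι (φ ω), ι (φ'' ω)⟫
      = 2 * ‖ι (φ' ω)‖ ^ 2 - fderiv ℝ (fderiv ℝ (fderiv ℝ E)) (φ ω) (φ' ω) (φ' ω) (φ' ω) := by
  have hsymm : IsSymmSndFDerivAt ℝ E (φ ω) :=
    hE.contDiffAt.isSymmSndFDerivAt <| by
      simp only [minSmoothness_of_isRCLikeNormedField]; norm_cast
  have h₁ := fderiv_fderiv_apply_eq_of_stationary hQ hΩ hφ' hstat (hE.of_le (by norm_cast))
    hω (φ'' ω)
  have h₂ := fderiv_fderiv_fderiv_apply_eq_of_stationary hQ hΩ hφ' hstat hE hφ'' hω (φ' ω)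
  rw [hsymm, h₁, real_inner_comm (ι (φ' ω)) (ι (φ'' ω)), real_inner_self_eq_norm_sq] at h₂
  linarith

end Stationary

theorem stmt_17_general {X H : Type*}
    [NormedAddCommGroup X] [InnerProductSpace ℝ X]
    [NormedAddCommGroup H] [InnerProductSpace ℝ H]
    (ι : X →L[ℝ] H)
    (Ω : Set ℝ) (hΩ : IsOpen Ω)
    (E : X → ℝ) (hE : ContDiff ℝ 3 E)
    (Q : X → ℝ) (hQ : ∀ u, Q u = (1/2) * ‖ι u‖^2)
    (φ φ' φ'' : ℝ → X)
    (hφ' : ∀ ω ∈ Ω, HasDerivAt φ (φ' ω) ω)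
    (hφ'' : ∀ ω ∈ Ω, HasDerivAt φ' (φ'' ω) ω)
    (hstat : ∀ ω ∈ Ω, fderiv ℝ E (φ ω) = ω • fderiv ℝ Q (φ ω)) :
    ∀ ω ∈ Ω, HasDerivAt (fun w => -⟪ι (φ w), ι (φ' w)⟫)
      (fderiv ℝ (fderiv ℝ (fderiv ℝ E)) (φ ω) (φ' ω) (φ' ω) (φ' ω) - 3 * ‖ι (φ' ω)‖^2) ω := by
  intro ω hω
  have hιφ := ι.hasFDerivAt.comp_hasDerivAt ω (hφ' ω hω)
  have hιφ' := ι.hasFDerivAt.comp_hasDerivAt ω (hφ'' ω hω)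
  refine (hιφ.inner ℝ hιφ').neg.congr_deriv ?_
  rw [Function.comp_apply, Function.comp_apply,
    inner_second_deriv_eq_of_stationary hQ hΩ hφ' hstat hE hφ'' hω,
    real_inner_self_eq_norm_sq]
  ring

theorem stmt_17 {X H : Type*}
    [NormedAddCommGroup X] [InnerProductSpace ℝ X] [CompleteSpace X]
    [NormedAddCommGroup H] [InnerProductSpace ℝ H] [CompleteSpace H]
    (ι : X →L[ℝ] H)
    (Ω : Set ℝ) (hΩ : IsOpen Ω)
    (E : X → ℝ) (hE : ContDiff ℝ 3 E)
    (Q : X → ℝ) (hQ : ∀ u, Q u = (1/2) * ‖ι u‖^2)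
    (φ φ' φ'' : ℝ → X)
    (hφ' : ∀ ω ∈ Ω, HasDerivAt φ (φ' ω) ω)
    (hφ'' : ∀ ω ∈ Ω, HasDerivAt φ' (φ'' ω) ω)
    (hstat : ∀ ω ∈ Ω, fderiv ℝ E (φ ω) = ω • fderiv ℝ Q (φ ω))
    (d : ℝ → ℝ) (hd : ∀ ω, d ω = E (φ ω) - ω * Q (φ ω))
    (hd' : ∀ ω ∈ Ω, HasDerivAt d (-(Q (φ ω))) ω)
    (hd'' : ∀ ω ∈ Ω, HasDerivAt (fun w => -(Q (φ w))) (-⟪ι (φ ω), ι (φ' ω)⟫) ω) :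
    ∀ ω ∈ Ω, HasDerivAt (fun w => -⟪ι (φ w), ι (φ' w)⟫)
      (fderiv ℝ (fderiv ℝ (fderiv ℝ E)) (φ ω) (φ' ω) (φ' ω) (φ' ω) - 3 * ‖ι (φ' ω)‖^2) ω :=
  stmt_17_general ι Ω hΩ E hE Q hQ φ φ' φ'' hφ' hφ'' hstat
end
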